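/- arXiv:1912.00459 — 2 statements merged into one kernel-verified Lean document; each statement's English description precedes it below -/
import Mathlib

section
/- For any n agents with additive valuations and positive total values, there exists an equitable fractional allocation with at most n−1 sharings in which the common relative value is maximized over all equitable allocations. -/
open Finset

/-- `z` is a feasible fractional allocation of `m` objects among `n` agents. -/
def isAlloc {n m : ℕ} (z : Fin n → Fin m → ℝ) : Prop :=
  (∀ i o, 0 ≤ z i o) ∧ ∀ o, ∑ i, z i o = 1

/-- Agent `i`'s additive utility for her own bundle in allocation `z`. -/
noncomputable def util {n m : ℕ} (v z : Fin n → Fin m → ℝ) (i : Fin n) : ℝ :=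
  ∑ o, v i o * z i o

/-- The number of sharings of allocation `z`: `Σ_o (|{i : z i o > 0}| − 1)`. -/
noncomputable def sharings {n m : ℕ} (z : Fin n → Fin m → ℝ) : ℕ :=
  ∑ o, ((univ.filter fun i => 0 < z i o).card - 1)

/-- `z` is equitable: all agents get the same relative value. -/
noncomputable def equitable {n m : ℕ} (v z : Fin n → Fin m → ℝ) : Prop :=
  ∀ i j, util v z i / (∑ o, v i o) = util v z j / (∑ o, v j o)

/-!
The equitable allocations form a polytope `{z | 0 ≤ z ∧ A z = b}`, where `A` records the `m`
column sums and the `n - 1` differences between the relative value of agent `j + 1` and that of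
agent `0`; so `A` maps into a space of dimension `m + n - 1`. This polytope is compact and, thanks
to the equal split, nonempty, hence the linear objective "relative value of agent `0`" is
maximised at an extreme point (Krein–Milman applied to the exposed face of maximisers). At an
extreme point the columns of `A` indexed by the support are linearly independent: a kernel
direction supported there could be both added and subtracted in small amounts. So at most
`m + n - 1` entries are positive, and since every object is held by somebody, at most `n - 1`
sharings occur.
-/

open Module

section Polytope

variable {ι E : Type*} [Fintype ι] [AddCommGroup E] [Module ℝ E]

lemma exists_pos_forall_mul_abs_le {x d : ι → ℝ} (hx : 0 ≤ x)
    (hd : ∀ p, d p ≠ 0 → 0 < x p) :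
    ∃ ε > 0, ∀ p, ε * |d p| ≤ x p := by
  refine (Filter.eventually_all.2 fun p => ?_).exists_gt
  by_cases hdp : d p = 0
  · simpa [hdp] using hx p
  · exact ((continuous_mul_const |d p|).tendsto' 0 0 (zero_mul _)).eventually
      (eventually_le_nhds (hd p hdp))

lemma eq_zero_of_map_eq_zero_of_mem_extremePoints {A : (ι → ℝ) →ₗ[ℝ] E} {b : E}
    {x d : ι → ℝ} (hx : x ∈ {x | 0 ≤ x ∧ A x = b}.extremePoints ℝ) (hAd : A d = 0)
    (hd : ∀ p, d p ≠ 0 → 0 < x p) : d = 0 := by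
  obtain ⟨⟨hx0, hxb⟩, hext⟩ := mem_extremePoints.1 hx
  obtain ⟨ε, hε, hεd⟩ := exists_pos_forall_mul_abs_le hx0 hd
  have hmem : ∀ s : ℝ, |s| ≤ ε → x + s • d ∈ {x | 0 ≤ x ∧ A x = b} := by
    intro s hs
    refine ⟨fun p => ?_, by simp [hxb, hAd]⟩
    have hsd : |s * d p| ≤ x p := by
      rw [abs_mul]
      exact (mul_le_mul_of_nonneg_right hs (abs_nonneg _)).trans (hεd p)
    show 0 ≤ x p + s * d p
    linarith [neg_le_abs (s * d p)]
  have hseg : x ∈ openSegment ℝ (x + (-ε) • d) (x + ε • d) := by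
    simpa [neg_smul, ← sub_eq_add_neg] using mem_openSegment_sub_add (𝕜 := ℝ) x (ε • d)
  have hshift : x + ε • d = x :=
    (hext _ (hmem (-ε) ((abs_neg ε).trans_le (abs_of_pos hε).le)) _
      (hmem ε (abs_of_pos hε).le) hseg).2
  simpa [hε.ne'] using hshift

lemma card_pos_le_finrank_of_mem_extremePoints [FiniteDimensional ℝ E]
    {A : (ι → ℝ) →ₗ[ℝ] E} {b : E} {x : ι → ℝ}
    (hx : x ∈ {x | 0 ≤ x ∧ A x = b}.extremePoints ℝ) :
    #{p | 0 < x p} ≤ finrank ℝ E := by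
  classical
  have hind : LinearIndependent ℝ fun p : {p // 0 < x p} => A (Pi.single p.1 1) := by
    refine Fintype.linearIndependent_iff.2 fun c hc q => ?_
    set d : ι → ℝ := ∑ p, c p • Pi.single p.1 1
    have hd_off : ∀ i, ¬ 0 < x i → d i = 0 := fun i hi => by
      simp only [d, Finset.sum_apply, Pi.smul_apply, smul_eq_mul]
      exact sum_eq_zero fun p _ => by
        rw [Pi.single_eq_of_ne (fun h : i = p.1 => hi (h ▸ p.2)), mul_zero]
    have hd_on : d q = c q := by
      simp only [d, Finset.sum_apply, Pi.smul_apply, smul_eq_mul]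
      rw [sum_eq_single q (fun p _ hpq => by
        rw [Pi.single_eq_of_ne (fun h => hpq (Subtype.ext h.symm)), mul_zero]) (by simp)]
      simp
    have hd : d = 0 := eq_zero_of_map_eq_zero_of_mem_extremePoints hx
      (by simpa [d, map_sum] using hc) fun i hi => by_contra fun hxi => hi (hd_off i hxi)
    rw [← hd_on, hd, Pi.zero_apply]
  rw [← Fintype.card_subtype]
  exact hind.fintype_card_le_finrank

end Polytope

lemma IsCompact.exists_mem_extremePoints_isMaxOn {E : Type*} [AddCommGroup E] [Module ℝ E]
    [TopologicalSpace E] [T2Space E] [IsTopologicalAddGroup E] [ContinuousSMul ℝ E]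
    [LocallyConvexSpace ℝ E] {K : Set E} (hK : IsCompact K) (hne : K.Nonempty)
    (l : StrongDual ℝ E) : ∃ x ∈ K.extremePoints ℝ, IsMaxOn l K x := by
  have hexp := ContinuousLinearMap.toExposed.isExposed (𝕜 := ℝ) (l := l) (A := K)
  obtain ⟨y, hyK, hy⟩ := hK.exists_isMaxOn hne l.continuous.continuousOn
  obtain ⟨x, hx⟩ := (hexp.isCompact hK).extremePoints_nonempty ⟨y, hyK, fun z hz => hy hz⟩
  exact ⟨x, hexp.isExtreme.extremePoints_subset_extremePoints hx,
    fun z hz => (extremePoints_subset hx).2 z hz⟩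

section Allocation

variable {n m k : ℕ}

def equitableAllocs (v : Fin n → Fin m → ℝ) : Set (Fin n → Fin m → ℝ) :=
  {z | isAlloc z ∧ equitable v z}

noncomputable def relValue (v : Fin n → Fin m → ℝ) (i : Fin n) :
    (Fin n → Fin m → ℝ) →ₗ[ℝ] ℝ where
  toFun z := util v z i / ∑ o, v i o
  map_add' z w := by simp only [util, Pi.add_apply, mul_add, sum_add_distrib, add_div]
  map_smul' c z := by
    simp only [util, Pi.smul_apply, smul_eq_mul, RingHom.id_apply, mul_sum, mul_div_assoc,
      sum_div]
    exact sum_congr rfl fun o _ => by ring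

lemma isAlloc.le_one {z : Fin n → Fin m → ℝ} (hz : isAlloc z) : z ≤ 1 := fun i o =>
  (single_le_sum (fun j _ => hz.1 j o) (mem_univ i)).trans_eq (hz.2 o)

lemma equitableAllocs_nonempty [NeZero n] {v : Fin n → Fin m → ℝ}
    (hV : ∀ i, ∑ o, v i o ≠ 0) : (equitableAllocs v).Nonempty := by
  have hn : (n : ℝ) ≠ 0 := NeZero.ne _
  have hrel : ∀ i, util v (fun _ _ => (n : ℝ)⁻¹) i / ∑ o, v i o = (n : ℝ)⁻¹ := by
    intro i
    rw [util, ← sum_mul, mul_div_right_comm, div_self (hV i), one_mul]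
  refine ⟨fun _ _ => (n : ℝ)⁻¹, ⟨fun _ _ => by positivity, fun _ => ?_⟩, fun i j => ?_⟩
  · simp [hn]
  · rw [hrel, hrel]

noncomputable def allocConstraints (v : Fin (k + 1) → Fin m → ℝ) :
    (Fin (k + 1) → Fin m → ℝ) →ₗ[ℝ] (Fin m → ℝ) × (Fin k → ℝ) :=
  (∑ i, LinearMap.proj i).prod (LinearMap.pi fun j => relValue v j.succ - relValue v 0)

lemma isAlloc_iff {z : Fin n → Fin m → ℝ} : isAlloc z ↔ 0 ≤ z ∧ ∑ i, z i = 1 := by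
  simp only [isAlloc, Pi.le_def, Pi.zero_apply, funext_iff, Finset.sum_apply, Pi.one_apply]

lemma equitable_iff_forall_succ {v z : Fin (k + 1) → Fin m → ℝ} :
    equitable v z ↔ ∀ j : Fin k, relValue v j.succ z = relValue v 0 z := by
  refine ⟨fun h j => h _ _, fun h i j => ?_⟩
  have h' : ∀ i, relValue v i z = relValue v 0 z := Fin.cases rfl h
  exact (h' i).trans (h' j).symm

lemma equitableAllocs_eq (v : Fin (k + 1) → Fin m → ℝ) :
    equitableAllocs v = {z | 0 ≤ z ∧ allocConstraints v z = (1, 0)} := by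
  ext z
  simp [equitableAllocs, isAlloc_iff, equitable_iff_forall_succ, allocConstraints, funext_iff,
    sub_eq_zero, and_assoc]

lemma isCompact_equitableAllocs (v : Fin (k + 1) → Fin m → ℝ) :
    IsCompact (equitableAllocs v) := by
  have hclosed : IsClosed (equitableAllocs v) := by
    rw [equitableAllocs_eq]
    exact (isClosed_le continuous_const continuous_id).inter
      (isClosed_eq (allocConstraints v).continuous_of_finiteDimensional continuous_const)
  exact isCompact_Icc.of_isClosed_subset hclosed fun z hz => ⟨hz.1.1, hz.1.le_one⟩

lemma sharings_add_eq_card {z : Fin n → Fin m → ℝ} (hz : isAlloc z) :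
    sharings z + m = #{p : Fin n × Fin m | 0 < z p.1 p.2} := by
  have hcol : ∀ o, 1 ≤ #{i | 0 < z i o} := fun o => by
    rw [Nat.one_le_iff_ne_zero, Ne, card_eq_zero, filter_eq_empty_iff]
    intro h
    exact one_ne_zero ((hz.2 o).symm.trans
      (sum_eq_zero fun i _ => le_antisymm (not_lt.1 (h (mem_univ i))) (hz.1 i o)))
  calc sharings z + m = ∑ o, (#{i | 0 < z i o} - 1 + 1) := by simp [sharings, sum_add_distrib]
    _ = ∑ o, #{i | 0 < z i o} := sum_congr rfl fun o _ => Nat.sub_add_cancel (hcol o)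
    _ = #{p : Fin n × Fin m | 0 < z p.1 p.2} := by
      simp only [card_filter]
      rw [Fintype.sum_prod_type, sum_comm]

lemma card_pos_le_of_mem_extremePoints {v : Fin (k + 1) → Fin m → ℝ}
    {z : Fin (k + 1) → Fin m → ℝ} (hz : z ∈ (equitableAllocs v).extremePoints ℝ) :
    #{p : Fin (k + 1) × Fin m | 0 < z p.1 p.2} ≤ m + k := by
  let e := LinearEquiv.curry ℝ ℝ (Fin (k + 1)) (Fin m)
  have hP : e.symm '' equitableAllocs v =
      {x | 0 ≤ x ∧ (allocConstraints v ∘ₗ e.toLinearMap) x = (1, 0)} := by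
    rw [e.image_symm_eq_preimage, equitableAllocs_eq]
    ext x
    simp [e, Pi.le_def, Prod.forall]
  have hx := hP ▸ image_extremePoints e.symm _ ▸ Set.mem_image_of_mem e.symm hz
  exact (card_pos_le_finrank_of_mem_extremePoints hx).trans_eq (by simp [finrank_prod])

end Allocation

/-- If all total values are positive, there exists an equitable allocation with at most
`n − 1` sharings whose common relative value is maximal among equitable allocations. -/
theorem exists_max_equitable_few_sharings {n m : ℕ} (hn : 0 < n)
    (v : Fin n → Fin m → ℝ) (hV : ∀ i, 0 < ∑ o, v i o) :
    ∃ z : Fin n → Fin m → ℝ, isAlloc z ∧ sharings z ≤ n - 1 ∧ equitable v z ∧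
      ∀ z' : Fin n → Fin m → ℝ, isAlloc z' → equitable v z' →
        ∀ i, util v z' i / (∑ o, v i o) ≤ util v z i / (∑ o, v i o) := by
  obtain ⟨k, rfl⟩ := Nat.exists_eq_add_one_of_ne_zero hn.ne'
  obtain ⟨z, hz, hmax⟩ := (isCompact_equitableAllocs v).exists_mem_extremePoints_isMaxOn
    (equitableAllocs_nonempty fun i => (hV i).ne') (relValue v 0).toContinuousLinearMap
  obtain ⟨hza, hze⟩ := extremePoints_subset hz
  have hcard := card_pos_le_of_mem_extremePoints hz
  have hsharings := sharings_add_eq_card hza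
  refine ⟨z, hza, by omega, hze, fun z' hz'a hz'e i => ?_⟩
  rw [hz'e i 0, hze i 0]
  exact hmax ⟨hz'a, hz'e⟩
end

section
/- The n(n−1) bound for consensus allocations is tight: there is an instance with n agents and n(n−1) goods in which every consensus allocation must share all n(n−1) objects. -/
open Finset

/-! An unshared object goes entirely to one agent `j`. Its owner values it at `n − 1/2`, so
the owner's value for `j`'s bundle is at least `n − 1/2 > n − 1`, contradicting consensus. -/

namespace isAlloc

variable {n m : ℕ} {z : Fin n → Fin m → ℝ}

theorem le_one_s8 (hz : isAlloc z) (i : Fin n) (o : Fin m) : z i o ≤ 1 :=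
  hz.2 o ▸ single_le_sum (fun i' _ => hz.1 i' o) (mem_univ i)

theorem exists_eq_one_of_not_shared (hz : isAlloc z) (o : Fin m)
    (hnot : ∀ i, ¬(0 < z i o ∧ z i o < 1)) : ∃ j, z j o = 1 := by
  by_contra! hne
  have hzero : ∀ i, z i o = 0 := fun i =>
    ((hz.1 i o).eq_or_lt.resolve_right fun hpos =>
      hnot i ⟨hpos, (hz.le_one_s8 i o).lt_of_ne (hne i)⟩).symm
  simpa [hzero] using hz.2 o

theorem exists_shared_of_value_gt (hz : isAlloc z) {v : Fin m → ℝ} (hv : ∀ o, 0 ≤ v o)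
    {c : ℝ} (hcons : ∀ j, ∑ o, v o * z j o = c) {o : Fin m} (hlt : c < v o) :
    ∃ j, 0 < z j o ∧ z j o < 1 := by
  by_contra! hnot
  obtain ⟨j, hj⟩ := hz.exists_eq_one_of_not_shared o fun i h => (hnot i h.1).not_gt h.2
  have hle : v o * z j o ≤ ∑ o', v o' * z j o' :=
    single_le_sum (fun o' _ => mul_nonneg (hv o') (hz.1 j o')) (mem_univ o)
  rw [hj, mul_one, hcons j] at hle
  exact hle.not_gt hlt

end isAlloc

theorem consensus_tight_all_shared_general (n : ℕ)
    (owner : Fin (n * (n - 1)) → Fin n)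
    (v : Fin n → Fin (n * (n - 1)) → ℝ)
    (hv : ∀ i o, v i o = if owner o = i then (n : ℝ) - 1/2 else (1/2) / ((n : ℝ) - 1))
    (z : Fin n → Fin (n * (n - 1)) → ℝ) (hz : isAlloc z)
    (hcons : ∀ i j, ∑ o, v i o * z j o = (n : ℝ) - 1) :
    ∀ o, ∃ i, 0 < z i o ∧ z i o < 1 := by
  intro o
  have hn : (1 : ℝ) ≤ n := by exact_mod_cast (owner o).pos
  have hv_nonneg : ∀ o', 0 ≤ v (owner o) o' := fun o' => by
    rw [hv]
    split_ifs
    · linarith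
    · exact div_nonneg (by norm_num) (by linarith)
  refine hz.exists_shared_of_value_gt hv_nonneg (hcons (owner o)) ?_
  rw [hv, if_pos rfl]
  linarith

/-- Tightness of the `n(n−1)` bound for consensus allocations: with `n` agents and
`n(n−1)` goods partitioned into `n` disjoint sets of size `n − 1` (the `owner` fibers),
where agent `i` values his own goods at `n − 0.5` and the others at `0.5/(n−1)`,
every consensus allocation must share every object. -/
theorem consensus_tight_all_shared (n : ℕ) (hn : 2 ≤ n)
    (owner : Fin (n * (n - 1)) → Fin n)
    (howner : ∀ i, (univ.filter fun o => owner o = i).card = n - 1)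
    (v : Fin n → Fin (n * (n - 1)) → ℝ)
    (hv : ∀ i o, v i o = if owner o = i then (n : ℝ) - 1/2 else (1/2) / ((n : ℝ) - 1))
    (z : Fin n → Fin (n * (n - 1)) → ℝ) (hz : isAlloc z)
    (hcons : ∀ i j, ∑ o, v i o * z j o = (n : ℝ) - 1) :
    ∀ o, ∃ i, 0 < z i o ∧ z i o < 1 :=
  consensus_tight_all_shared_general n owner v hv z hz hcons
end
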